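/- Let X be a real Hilbert space and σ : X → X a continuous monotone operator (i.e., ⟨σ(x) − σ(y), x − y⟩ ≥ 0 for all x, y ∈ X) that maps bounded sets to bounded sets. Then the map H : X → X defined by H(x) := x + σ(x) is a bijection from X onto X admitting a continuous inverse H⁻¹ : X → X. -/

import Mathlib

/-!
Monotonicity of `σ` makes `H = id + σ` expand distances, which gives injectivity and a
1-Lipschitz inverse. Surjectivity is Minty's theorem, proved through Kirszbraun's argument:
monotonicity says exactly that the correspondence `x + σ x ↦ x - σ x` is nonexpansive, so for a
given `z` there is a `w` with `‖w - (x - σ x)‖ ≤ ‖z - (x + σ x)‖` for all `x`. For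
`h = (z + w) / 2` and `k = (z - w) / 2` this says `⟪k - σ x, h - x⟫ ≥ 0` for all `x`, and testing
with `x = h - t (σ h - k)`, `t → 0⁺`, forces `σ h = k`, i.e. `h + σ h = z`.

Finding `w` means intersecting the balls `B(x - σ x, ‖z - (x + σ x)‖)`. For finitely many balls,
minimise the largest excess `‖w - q i‖² - r i²` over the convex hull of the centres: at a
minimiser the point lies in the hull of the centres where the maximum is attained (otherwise
moving towards that hull decreases every active excess), and averaging over those centres with
nonexpansiveness shows the excess is `≤ 0`. Arbitrary families of closed convex sets with the
finite intersection property, one of them bounded, meet in a Hilbert space: the minimal-norm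
points of the finite intersections form a Cauchy net.
-/

open scoped RealInnerProductSpace
open Bornology
open Filter Topology Set

section

variable {X : Type*} [NormedAddCommGroup X] [InnerProductSpace ℝ X]

theorem norm_sub_le_norm_add_iff_inner_nonneg (a b : X) :
    ‖a - b‖ ≤ ‖a + b‖ ↔ 0 ≤ ⟪a, b⟫ := by
  rw [← sq_le_sq₀ (norm_nonneg _) (norm_nonneg _), norm_sub_sq_real, norm_add_sq_real]
  constructor <;> intro h <;> linarith

theorem norm_le_norm_add_of_inner_nonneg {a b : X} (h : 0 ≤ ⟪a, b⟫) : ‖a‖ ≤ ‖a + b‖ := by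
  rw [← sq_le_sq₀ (norm_nonneg _) (norm_nonneg _), norm_add_sq_real]
  nlinarith [sq_nonneg ‖b‖]

-- `u + v` is the point of `K` nearest to `u`.
theorem exists_add_mem_forall_norm_sq_le_inner {K : Set X} (hne : K.Nonempty)
    (hK : IsComplete K) (hconv : Convex ℝ K) (u : X) :
    ∃ v, u + v ∈ K ∧ ∀ b ∈ K, ‖v‖ ^ 2 ≤ ⟪b - u, v⟫ := by
  obtain ⟨p, hpK, hp⟩ := exists_norm_eq_iInf_of_complete_convex hne hK hconv u
  refine ⟨p - u, by simpa using hpK, fun b hb => ?_⟩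
  have h := (norm_eq_iInf_iff_real_inner_le_zero hconv hpK).1 hp b hb
  have e : b - u = (b - p) + (p - u) := by abel
  rw [← neg_sub p u, inner_neg_left, real_inner_comm] at h
  rw [e, inner_add_left, real_inner_self_eq_norm_sq]
  linarith

theorem sum_sum_mul_norm_sub_sq {ι : Type*} {s : Finset ι} {w : ι → ℝ}
    (hw : ∑ i ∈ s, w i = 1) (c : ι → X) :
    ∑ i ∈ s, ∑ j ∈ s, w i * w j * ‖c i - c j‖ ^ 2
      = 2 * ∑ i ∈ s, w i * ‖c i‖ ^ 2 - 2 * ‖∑ i ∈ s, w i • c i‖ ^ 2 := by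
  simp_rw [norm_sub_sq_real, ← real_inner_self_eq_norm_sq, sum_inner, inner_sum,
    real_inner_smul_left, real_inner_smul_right, mul_add, mul_sub, Finset.sum_add_distrib,
    Finset.sum_sub_distrib, ← Finset.sum_mul, ← Finset.mul_sum, hw]
  have hsq : ∑ i ∈ s, ∑ j ∈ s, w i * w j * ⟪c j, c j⟫ = ∑ j ∈ s, w j * ⟪c j, c j⟫ := by
    rw [Finset.sum_comm]
    simp_rw [mul_comm (w _) (w _), mul_assoc, ← Finset.mul_sum, ← Finset.sum_mul, hw, one_mul]
  have hcross : ∑ i ∈ s, ∑ j ∈ s, w i * w j * (2 * ⟪c i, c j⟫)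
      = 2 * ∑ i ∈ s, w i * ∑ j ∈ s, w j * ⟪c i, c j⟫ := by
    simp_rw [Finset.mul_sum]
    exact Finset.sum_congr rfl fun _ _ => Finset.sum_congr rfl fun _ _ => by ring
  rw [hsq, hcross]
  simp only [mul_one]
  ring

theorem sum_mul_norm_sum_smul_sub_sq_le {ι : Type*} {p q : ι → X}
    (hpq : ∀ i j, ‖q i - q j‖ ≤ ‖p i - p j‖) {s : Finset ι} {w : ι → ℝ}
    (hw₀ : ∀ i ∈ s, 0 ≤ w i) (hw₁ : ∑ i ∈ s, w i = 1) (z : X) :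
    ∑ i ∈ s, w i * ‖∑ j ∈ s, w j • q j - q i‖ ^ 2 ≤ ∑ i ∈ s, w i * ‖z - p i‖ ^ 2 := by
  set y := ∑ j ∈ s, w j • q j
  have hq := sum_sum_mul_norm_sub_sq hw₁ fun i => y - q i
  have hp := sum_sum_mul_norm_sub_sq hw₁ fun i => z - p i
  simp only [smul_sub, Finset.sum_sub_distrib, ← Finset.sum_smul, hw₁, one_smul,
    sub_sub_sub_cancel_left] at hq hp
  rw [show y - ∑ i ∈ s, w i • q i = 0 from sub_self _, norm_zero] at hq
  have hle : ∑ i ∈ s, ∑ j ∈ s, w i * w j * ‖q j - q i‖ ^ 2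
      ≤ ∑ i ∈ s, ∑ j ∈ s, w i * w j * ‖p j - p i‖ ^ 2 :=
    Finset.sum_le_sum fun i hi => Finset.sum_le_sum fun j hj =>
      mul_le_mul_of_nonneg_left (pow_le_pow_left₀ (norm_nonneg _) (hpq j i) 2)
        (mul_nonneg (hw₀ i hi) (hw₀ j hj))
  nlinarith [sq_nonneg ‖z - ∑ i ∈ s, w i • p i‖]

theorem exists_norm_sub_le_of_mem_convexHull {ι : Type*} {p q : ι → X}
    (hpq : ∀ i j, ‖q i - q j‖ ≤ ‖p i - p j‖) (z : X) {y : X}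
    (hy : y ∈ convexHull ℝ (range q)) : ∃ i, ‖y - q i‖ ≤ ‖z - p i‖ := by
  rw [convexHull_range_eq_exists_affineCombination] at hy
  obtain ⟨s, w, hw₀, hw₁, rfl⟩ := hy
  rw [Finset.affineCombination_eq_linear_combination s q w hw₁]
  by_contra! hfar
  obtain ⟨i, hi, hwi⟩ : ∃ i ∈ s, 0 < w i :=
    Finset.exists_lt_of_sum_lt (by simp [hw₁])
  have hlt : ∑ i ∈ s, w i * ‖z - p i‖ ^ 2 < ∑ i ∈ s, w i * ‖∑ j ∈ s, w j • q j - q i‖ ^ 2 := by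
    refine Finset.sum_lt_sum (fun j hj => ?_) ⟨i, hi, ?_⟩
    · exact mul_le_mul_of_nonneg_left (pow_le_pow_left₀ (norm_nonneg _) (hfar j).le 2) (hw₀ j hj)
    · exact mul_lt_mul_of_pos_left (pow_lt_pow_left₀ (hfar i) (norm_nonneg _) two_ne_zero) hwi
  exact (sum_mul_norm_sum_smul_sub_sq_le hpq hw₀ hw₁ z).not_gt hlt

theorem eventually_forall_norm_add_smul_sub_sq_sub_lt {ι : Type*} {s : Finset ι} {q : ι → X}
    {c : ι → ℝ} {w v : X} {m : ℝ} (hv : v ≠ 0) (hle : ∀ i ∈ s, ‖w - q i‖ ^ 2 - c i ≤ m)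
    (hact : ∀ i ∈ s, ‖w - q i‖ ^ 2 - c i = m → ‖v‖ ^ 2 ≤ ⟪q i - w, v⟫) :
    ∀ᶠ t in 𝓝[>] (0 : ℝ), ∀ i ∈ s, ‖w + t • v - q i‖ ^ 2 - c i < m := by
  rw [eventually_all_finset]
  intro i hi
  rcases (hle i hi).eq_or_lt with hmax | hlt
  · have hv2 : 0 < ‖v‖ ^ 2 := by positivity
    have hdesc := hact i hi hmax
    filter_upwards [Ioo_mem_nhdsGT two_pos] with t ⟨ht0, ht2⟩
    have hexp : ‖w + t • v - q i‖ ^ 2 = ‖w - q i‖ ^ 2 - 2 * t * ⟪q i - w, v⟫ + t ^ 2 * ‖v‖ ^ 2 := by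
      rw [show w + t • v - q i = (w - q i) + t • v by abel, norm_add_sq_real,
        real_inner_smul_right, norm_smul, Real.norm_eq_abs, mul_pow, sq_abs, ← neg_sub (q i) w,
        inner_neg_left]
      ring
    nlinarith [mul_le_mul_of_nonneg_left hdesc ht0.le, mul_pos (mul_pos ht0 (sub_pos.2 ht2)) hv2]
  · have hc : Continuous fun t : ℝ => ‖w + t • v - q i‖ ^ 2 - c i := by fun_prop
    exact ((hc.tendsto 0).mono_left nhdsWithin_le_nhds).eventually_lt_const (by simpa using hlt)

theorem exists_forall_norm_sub_le_of_finset {ι : Type*} {p q : ι → X}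
    (hpq : ∀ i j, ‖q i - q j‖ ≤ ‖p i - p j‖) (z : X) (s : Finset ι) :
    ∃ w, ∀ i ∈ s, ‖w - q i‖ ≤ ‖z - p i‖ := by
  classical
  rcases s.eq_empty_or_nonempty with rfl | hs
  · exact ⟨z, by simp⟩
  let g : X → ι → ℝ := fun w i => ‖w - q i‖ ^ 2 - ‖z - p i‖ ^ 2
  let K := convexHull ℝ (q '' s)
  have hK : IsCompact K := (s.finite_toSet.image q).isCompact_convexHull ℝ
  have hKne : K.Nonempty := ((Finset.coe_nonempty.2 hs).image q).convexHull
  have hcont : Continuous fun w => s.sup' hs (g w) :=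
    Continuous.finset_sup'_apply hs fun i _ => by fun_prop
  obtain ⟨w₀, hw₀K, hmin⟩ := hK.exists_isMinOn hKne hcont.continuousOn
  set m := s.sup' hs (g w₀)
  have hle : ∀ i ∈ s, g w₀ i ≤ m := fun i hi => Finset.le_sup' (g w₀) hi
  suffices hm : m ≤ 0 by
    refine ⟨w₀, fun i hi => ?_⟩
    have := (hle i hi).trans hm
    exact (sq_le_sq₀ (norm_nonneg _) (norm_nonneg _)).1 (by linarith)
  by_contra! hm
  let A := s.filter fun i => g w₀ i = m
  let B := convexHull ℝ (range fun i : A => q i)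
  have hBK : B ⊆ K := convexHull_mono <| by
    rintro _ ⟨⟨i, hi⟩, rfl⟩
    exact ⟨i, (Finset.mem_filter.1 hi).1, rfl⟩
  have hBne : B.Nonempty := by
    obtain ⟨i, hi, him⟩ := Finset.exists_mem_eq_sup' hs (g w₀)
    exact ⟨q i, subset_convexHull ℝ _ ⟨⟨i, Finset.mem_filter.2 ⟨hi, him.symm⟩⟩, rfl⟩⟩
  obtain ⟨v, hvB, hv⟩ := exists_add_mem_forall_norm_sq_le_inner hBne
    ((finite_range _).isCompact_convexHull ℝ).isComplete (convex_convexHull ℝ _) w₀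
  have hv0 : v = 0 := by
    by_contra hv0
    have hdesc := eventually_forall_norm_add_smul_sub_sq_sub_lt hv0 hle fun i hi hmax =>
      hv _ (subset_convexHull ℝ _ ⟨⟨i, Finset.mem_filter.2 ⟨hi, hmax⟩⟩, rfl⟩)
    obtain ⟨t, hlt, ht⟩ := (hdesc.and (Ioc_mem_nhdsGT one_pos)).exists
    have hmem : w₀ + t • v ∈ K := by
      simpa using (convex_convexHull ℝ _).add_smul_sub_mem hw₀K (hBK hvB) ⟨ht.1.le, ht.2⟩
    exact absurd ((Finset.sup'_lt_iff hs).2 hlt) (not_lt.2 (hmin hmem))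
  rw [hv0, add_zero] at hvB
  obtain ⟨⟨i, hi⟩, hclose⟩ := exists_norm_sub_le_of_mem_convexHull
    (p := fun i : A => p i) (fun i j => hpq i j) z hvB
  have hmax : g w₀ i = m := (Finset.mem_filter.1 hi).2
  have := pow_le_pow_left₀ (norm_nonneg _) hclose 2
  simp only [g] at hmax
  linarith

theorem nonempty_iInter_of_isClosed_of_convex [CompleteSpace X] {ι : Type*} {C : ι → Set X}
    (hclosed : ∀ i, IsClosed (C i)) (hconv : ∀ i, Convex ℝ (C i)) {i₀ : ι}
    (hbdd : IsBounded (C i₀)) (hfin : ∀ s : Finset ι, (⋂ i ∈ s, C i).Nonempty) :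
    (⋂ i, C i).Nonempty := by
  classical
  choose m hmC hm using fun s : Finset ι => exists_add_mem_forall_norm_sq_le_inner (hfin s)
    (isClosed_biInter fun i _ => hclosed i).isComplete (convex_iInter₂ fun i _ => hconv i) 0
  simp only [zero_add, sub_zero] at hmC hm
  have hdist : ∀ s t : Finset ι, s ⊆ t → ‖m t - m s‖ ^ 2 ≤ ‖m t‖ ^ 2 - ‖m s‖ ^ 2 := by
    intro s t hst
    have := hm s (m t) (biInter_subset_biInter_left hst (hmC t))
    rw [norm_sub_sq_real]
    linarith
  have hmono : Monotone fun s => ‖m s‖ ^ 2 := fun s t hst => by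
    linarith [hdist s t hst, sq_nonneg ‖m t - m s‖]
  obtain ⟨R, hR⟩ := hbdd.exists_norm_le
  have hbound : ∀ s, ‖m s‖ ^ 2 ≤ R ^ 2 := fun s =>
    (hmono (Finset.subset_insert i₀ s)).trans <| pow_le_pow_left₀ (norm_nonneg _)
      (hR _ (mem_iInter₂.1 (hmC _) i₀ (Finset.mem_insert_self i₀ s))) 2
  have hbdd' : BddAbove (range fun s => ‖m s‖ ^ 2) := ⟨R ^ 2, forall_mem_range.2 hbound⟩
  have hcauchy : CauchySeq m := by
    rw [Metric.cauchySeq_iff']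
    intro ε hε
    set L := ⨆ s, ‖m s‖ ^ 2
    obtain ⟨N, hN⟩ := eventually_atTop.1 <| (tendsto_atTop_ciSup hmono hbdd').eventually_const_lt
      (show L - ε ^ 2 < L by linarith [pow_pos hε 2])
    refine ⟨N, fun s hs => lt_of_pow_lt_pow_left₀ 2 hε.le ?_⟩
    rw [dist_eq_norm]
    linarith [hdist N s hs, le_ciSup hbdd' s, hN N le_rfl]
  obtain ⟨w, hw⟩ := cauchySeq_tendsto_of_complete hcauchy
  refine ⟨w, mem_iInter.2 fun i => (hclosed i).mem_of_tendsto hw ?_⟩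
  filter_upwards [eventually_ge_atTop {i}] with s hs
  exact mem_iInter₂.1 (hmC s) i (Finset.singleton_subset_iff.1 hs)

theorem exists_forall_norm_sub_le [CompleteSpace X] {ι : Type*} {p q : ι → X}
    (hpq : ∀ i j, ‖q i - q j‖ ≤ ‖p i - p j‖) (z : X) : ∃ w, ∀ i, ‖w - q i‖ ≤ ‖z - p i‖ := by
  rcases isEmpty_or_nonempty ι with hι | ⟨⟨i₀⟩⟩
  · exact ⟨z, isEmptyElim⟩
  obtain ⟨w, hw⟩ := nonempty_iInter_of_isClosed_of_convex
    (C := fun i => Metric.closedBall (q i) ‖z - p i‖) (fun _ => Metric.isClosed_closedBall)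
    (fun _ => convex_closedBall _ _) (i₀ := i₀) Metric.isBounded_closedBall fun s => by
      obtain ⟨w, hw⟩ := exists_forall_norm_sub_le_of_finset hpq z s
      exact ⟨w, mem_iInter₂.2 fun i hi => mem_closedBall_iff_norm.2 (hw i hi)⟩
  exact ⟨w, fun i => mem_closedBall_iff_norm.1 (mem_iInter.1 hw i)⟩

theorem apply_eq_of_forall_inner_sub_nonneg {σ : X → X} {x k : X} (hσ : ContinuousAt σ x)
    (h : ∀ y, 0 ≤ ⟪k - σ y, x - y⟫) : σ x = k := by
  set v := σ x - k
  have hline : Tendsto (fun t : ℝ => x - t • v) (𝓝 0) (𝓝 x) := by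
    have hc : Continuous fun t : ℝ => x - t • v := by fun_prop
    simpa using hc.tendsto 0
  have hlim : Tendsto (fun t : ℝ => ⟪k - σ (x - t • v), v⟫) (𝓝[>] 0) (𝓝 ⟪k - σ x, v⟫) :=
    ((tendsto_const_nhds.sub (hσ.tendsto.comp hline)).inner tendsto_const_nhds).mono_left
      nhdsWithin_le_nhds
  have hpos : ∀ t ∈ Ioi (0 : ℝ), 0 ≤ ⟪k - σ (x - t • v), v⟫ := fun t ht => by
    have := h (x - t • v)
    rw [sub_sub_cancel, real_inner_smul_right] at this
    exact (mul_nonneg_iff_of_pos_left ht).1 this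
  have hv := ge_of_tendsto hlim (eventually_nhdsWithin_of_forall hpos)
  rw [← neg_sub, inner_neg_left, real_inner_self_eq_norm_sq] at hv
  have hv0 : ‖v‖ ^ 2 = 0 := le_antisymm (by linarith) (sq_nonneg _)
  exact sub_eq_zero.1 (norm_eq_zero.1 (pow_eq_zero_iff two_ne_zero |>.1 hv0))

theorem surjective_id_add_of_monotone [CompleteSpace X] {σ : X → X} (hcont : Continuous σ)
    (hmono : ∀ x y, 0 ≤ ⟪σ x - σ y, x - y⟫) : Function.Surjective fun x => x + σ x := by
  intro z
  have hpq : ∀ x y : X, ‖(x - σ x) - (y - σ y)‖ ≤ ‖(x + σ x) - (y + σ y)‖ := fun x y => by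
    rw [show (x - σ x) - (y - σ y) = (x - y) - (σ x - σ y) by abel,
      show (x + σ x) - (y + σ y) = (x - y) + (σ x - σ y) by abel,
      norm_sub_le_norm_add_iff_inner_nonneg, real_inner_comm]
    exact hmono x y
  obtain ⟨w, hw⟩ := exists_forall_norm_sub_le hpq z
  set x := (1 / 2 : ℝ) • (z + w)
  set k := (1 / 2 : ℝ) • (z - w)
  have hk : σ x = k := apply_eq_of_forall_inner_sub_nonneg hcont.continuousAt fun y => by
    have := hw y
    rwa [show w - (y - σ y) = (x - y) - (k - σ y) by module,
      show z - (y + σ y) = (x - y) + (k - σ y) by module,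
      norm_sub_le_norm_add_iff_inner_nonneg, real_inner_comm] at this
  exact ⟨x, by simp only [hk, x, k]; module⟩

theorem antilipschitzWith_id_add_of_monotone {σ : X → X}
    (hmono : ∀ x y, 0 ≤ ⟪σ x - σ y, x - y⟫) : AntilipschitzWith 1 fun x => x + σ x :=
  AntilipschitzWith.of_le_mul_dist fun x y => by
    rw [NNReal.coe_one, one_mul, dist_eq_norm, dist_eq_norm,
      show x + σ x - (y + σ y) = (x - y) + (σ x - σ y) by abel]
    exact norm_le_norm_add_of_inner_nonneg (by rw [real_inner_comm]; exact hmono x y)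

end

theorem continuous_inverse_of_id_add_monotone_general
    {X : Type*} [NormedAddCommGroup X] [InnerProductSpace ℝ X] [CompleteSpace X]
    (σ : X → X)
    (hσ_cont : Continuous σ)
    (hσ_mono : ∀ x y : X, 0 ≤ ⟪σ x - σ y, x - y⟫) :
    Function.Bijective (fun x : X => x + σ x) ∧
      ∃ Hinv : X → X, Continuous Hinv ∧
        (∀ x : X, Hinv (x + σ x) = x) ∧ (∀ y : X, Hinv y + σ (Hinv y) = y) := by
  have hH := antilipschitzWith_id_add_of_monotone hσ_mono
  have hbij : Function.Bijective fun x => x + σ x :=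
    ⟨hH.injective, surjective_id_add_of_monotone hσ_cont hσ_mono⟩
  let e := Equiv.ofBijective _ hbij
  exact ⟨hbij, e.symm, (hH.to_rightInverse e.apply_symm_apply).continuous, e.symm_apply_apply,
    e.apply_symm_apply⟩

/-- Let `X` be a real Hilbert space and `σ : X → X` a continuous monotone operator mapping
bounded sets to bounded sets. Then `H(x) := x + σ(x)` is a bijection from `X` onto `X`
admitting a continuous inverse. -/
theorem continuous_inverse_of_id_add_monotone
    {X : Type*} [NormedAddCommGroup X] [InnerProductSpace ℝ X] [CompleteSpace X]
    (σ : X → X)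
    (hσ_cont : Continuous σ)
    (hσ_mono : ∀ x y : X, 0 ≤ ⟪σ x - σ y, x - y⟫)
    (hσ_bdd : ∀ s : Set X, IsBounded s → IsBounded (σ '' s)) :
    Function.Bijective (fun x : X => x + σ x) ∧
      ∃ Hinv : X → X, Continuous Hinv ∧
        (∀ x : X, Hinv (x + σ x) = x) ∧ (∀ y : X, Hinv y + σ (Hinv y) = y) :=
  continuous_inverse_of_id_add_monotone_general σ hσ_cont hσ_mono
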